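/- Let X be a connected compact Hausdorff space such that every continuous complex line bundle on X is trivial. Then the algebra C(X, ℂ) is projective free: every finitely generated projective C(X,ℂ)-module of rank 1 is free. -/

import Mathlib

/-!
An idempotent matrix `F` over `C(X, ℂ)` of pointwise rank one cuts out the line subbundle
`x ↦ range F(x)` of the trivial bundle `X × ℂⁿ`; over `{F i j ≠ 0}` it is trivialised by the
`i`-th coordinate, the inverse being a multiple of the `j`-th column. A global trivialisation
yields a nowhere-vanishing continuous section `s`, and `v ↦ ⟪s, v⟫ / ‖s‖²` is a coordinate on
the range of `F` exhibiting `s` as a basis of it over `C(X, ℂ)`.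
-/

open Bundle ContinuousMap Matrix

theorem Submodule.nonempty_basis_fin_one_of_retraction {R V : Type*} [Semiring R]
    [AddCommMonoid V] [Module R V] {M : Submodule R V} {s : V} (hs : s ∈ M) (φ : V →ₗ[R] R)
    (hφs : φ s = 1) (hM : ∀ m ∈ M, φ m • s = m) : Nonempty (Module.Basis (Fin 1) R M) :=
  let e : M ≃ₗ[R] R :=
    { toLinearMap := φ ∘ₗ M.subtype
      invFun := fun r => ⟨r • s, M.smul_mem r hs⟩
      left_inv := fun m => Subtype.ext (hM m m.2)
      right_inv := fun r => by simp [hφs] }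
  ⟨(Module.Basis.singleton (Fin 1) R).map e.symm⟩

theorem Matrix.exists_smul_eq_of_rank_eq_one {ι : Type*} [Fintype ι] {P : Matrix ι ι ℂ}
    (hP : P.rank = 1) {v w : ι → ℂ} (hv : v ∈ LinearMap.range P.mulVecLin)
    (hw : w ∈ LinearMap.range P.mulVecLin) (hv0 : v ≠ 0) : ∃ c : ℂ, c • v = w := by
  have hv0' : (⟨v, hv⟩ : LinearMap.range P.mulVecLin) ≠ 0 := by simpa using hv0
  obtain ⟨c, hc⟩ := (finrank_eq_one_iff_of_nonzero' _ hv0').mp hP ⟨w, hw⟩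
  exact ⟨c, congrArg Subtype.val hc⟩

theorem Matrix.col_mem_range_mulVecLin {ι R : Type*} [Fintype ι] [CommSemiring R]
    (P : Matrix ι ι R) (j : ι) : (fun k => P k j) ∈ LinearMap.range P.mulVecLin := by
  classical
  exact ⟨Pi.single j 1, by ext k; simp [mulVec_single]⟩

section Evaluation

variable {X ι R : Type*} [TopologicalSpace X] [Fintype ι] [CommSemiring R] [TopologicalSpace R]
  [IsTopologicalSemiring R]

theorem Matrix.mulVec_apply_apply (F : Matrix ι ι C(X, R)) (v : ι → C(X, R)) (k : ι) (x : X) :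
    (F *ᵥ v) k x = (F.map (· x) *ᵥ fun j => v j x) k := by
  simp [mulVec, dotProduct]

theorem Matrix.map_apply_mul (F G : Matrix ι ι C(X, R)) (x : X) :
    (F * G).map (· x) = F.map (· x) * G.map (· x) :=
  Matrix.map_mul (f := (ContinuousMap.evalAlgHom R R x : C(X, R) →+* R))

end Evaluation

section Coordinate

open ComplexOrder

variable {X ι : Type*} [TopologicalSpace X] [Fintype ι]

theorem dotProduct_star_smul_div_self {s : ι → ℂ} (hs : s ≠ 0) (c : ℂ) :
    (star s ⬝ᵥ c • s) / (star s ⬝ᵥ s) = c := by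
  rw [dotProduct_smul, smul_eq_mul,
    mul_div_cancel_right₀ _ (dotProduct_star_self_eq_zero.not.mpr hs)]

noncomputable def coordAlong {s : X → ι → ℂ} (hs : Continuous s) (hs0 : ∀ x, s x ≠ 0) :
    (ι → C(X, ℂ)) →ₗ[C(X, ℂ)] C(X, ℂ) where
  toFun v := ⟨fun x => (star (s x) ⬝ᵥ fun k => v k x) / (star (s x) ⬝ᵥ s x), by
    have hv : Continuous fun x k => v k x := continuous_pi fun k => (v k).continuous
    exact (hs.star.dotProduct hv).div (hs.star.dotProduct hs)
      fun x => dotProduct_star_self_eq_zero.not.mpr (hs0 x)⟩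
  map_add' v w := by
    ext x
    simp only [ContinuousMap.add_apply, Pi.add_apply, ContinuousMap.coe_mk, ← add_div,
      ← dotProduct_add]
    rfl
  map_smul' c v := by
    ext x
    simp only [ContinuousMap.mul_apply, Pi.smul_apply, smul_eq_mul, ContinuousMap.coe_mk,
      RingHom.id_apply, ← mul_div_assoc]
    rw [← smul_eq_mul (c x), ← dotProduct_smul]
    rfl

theorem coordAlong_apply {s : X → ι → ℂ} (hs : Continuous s) (hs0 : ∀ x, s x ≠ 0)
    (v : ι → C(X, ℂ)) (x : X) :
    coordAlong hs hs0 v x = (star (s x) ⬝ᵥ fun k => v k x) / (star (s x) ⬝ᵥ s x) :=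
  rfl

end Coordinate

section RangeBasis

variable {X ι : Type*} [TopologicalSpace X] [Fintype ι]

theorem nonempty_basis_range_of_section {F : Matrix ι ι C(X, ℂ)} (hFF : F * F = F)
    (hr : ∀ x, (F.map (· x)).rank = 1) {s : X → ι → ℂ} (hs : Continuous s)
    (hs0 : ∀ x, s x ≠ 0) (hsF : ∀ x, s x ∈ LinearMap.range (F.map (· x)).mulVecLin) :
    Nonempty (Module.Basis (Fin 1) C(X, ℂ) (LinearMap.range F.mulVecLin)) := by
  let σ : ι → C(X, ℂ) := fun k => ⟨fun x => s x k, (continuous_apply k).comp hs⟩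
  have hσx (x : X) : (fun k => σ k x) = s x := rfl
  have hσ : σ ∈ LinearMap.range F.mulVecLin := by
    refine ⟨σ, funext fun k => ContinuousMap.ext fun x => ?_⟩
    obtain ⟨u, hu⟩ := hsF x
    rw [mulVecLin_apply, mulVec_apply_apply, hσx, ← hu]
    simp only [mulVecLin_apply, mulVec_mulVec, ← map_apply_mul, hFF]
    exact congrFun hu k
  refine Submodule.nonempty_basis_fin_one_of_retraction hσ (coordAlong hs hs0) ?_ ?_
  · ext x
    have h := dotProduct_star_smul_div_self (hs0 x) 1
    rw [one_smul] at h
    rw [coordAlong_apply, hσx, h]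
    rfl
  · rintro _ ⟨u, rfl⟩
    funext k
    ext x
    obtain ⟨c, hc⟩ := exists_smul_eq_of_rank_eq_one (hr x) (hsF x)
      ⟨fun j => u j x, funext fun k => (mulVec_apply_apply F u k x).symm⟩ (hs0 x)
    have hcoord : coordAlong hs hs0 (F.mulVecLin u) x = c := by
      rw [coordAlong_apply, ← dotProduct_star_smul_div_self (hs0 x) c, hc]
      rfl
    rw [Pi.smul_apply, smul_eq_mul, ContinuousMap.mul_apply, hcoord]
    exact congrFun hc k

end RangeBasis

theorem Bundle.Trivialization.continuous_mk_symm {B F : Type*} {E : B → Type*}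
    [TopologicalSpace B] [TopologicalSpace F] [TopologicalSpace (TotalSpace F E)]
    [∀ b, Zero (E b)] (e : Trivialization F (π F E)) (he : e.baseSet = Set.univ) (v : F) :
    Continuous fun b => TotalSpace.mk' F b (e.symm b v) :=
  e.continuousOn_symm.comp_continuous
    (continuous_id.prodMk continuous_const) fun b => ⟨he ▸ Set.mem_univ b, Set.mem_univ v⟩

section LineBundle

variable {X ι : Type*} [TopologicalSpace X] [Fintype ι] (F : Matrix ι ι C(X, ℂ))

abbrev RangeFiber (x : X) : Type _ := LinearMap.range (F.map (· x)).mulVecLin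

namespace RangeFiber

def toProd (p : TotalSpace ℂ (RangeFiber F)) : X × (ι → ℂ) := (p.proj, p.snd)

noncomputable instance : TopologicalSpace (TotalSpace ℂ (RangeFiber F)) :=
  TopologicalSpace.induced (toProd F) inferInstance

theorem isInducing_toProd : Topology.IsInducing (toProd F) := ⟨rfl⟩

theorem continuous_toProd : Continuous (toProd F) := (isInducing_toProd F).continuous

theorem isInducing_mk (x : X) : Topology.IsInducing (@TotalSpace.mk X ℂ (RangeFiber F) x) := by
  rw [← (isInducing_toProd F).of_comp_iff]
  exact (isEmbedding_prodMkRight x).isInducing.comp .subtypeVal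

variable {F}

theorem smul_col_eq {x : X} (hr : (F.map (· x)).rank = 1) {v : ι → ℂ}
    (hv : v ∈ LinearMap.range (F.map (· x)).mulVecLin) {i j : ι} (hij : F i j x ≠ 0) :
    (v i / F i j x) • (fun k => F k j x) = v := by
  have hcol : (fun k => F k j x) ≠ 0 := fun h => hij (congrFun h i)
  obtain ⟨c, rfl⟩ := exists_smul_eq_of_rank_eq_one hr
    ((F.map (· x)).col_mem_range_mulVecLin j) hv hcol
  simp [hij]

noncomputable def localTriv (hr : ∀ x, (F.map (· x)).rank = 1) (i j : ι) :
    Trivialization ℂ (π ℂ (RangeFiber F)) where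
  toFun p := (p.proj, (p.snd : ι → ℂ) i)
  invFun q := ⟨q.1, ⟨(q.2 / F i j q.1) • fun k => F k j q.1,
    Submodule.smul_mem _ _ ((F.map (· q.1)).col_mem_range_mulVecLin j)⟩⟩
  source := π ℂ (RangeFiber F) ⁻¹' Function.support (F i j)
  target := Function.support (F i j) ×ˢ Set.univ
  map_source' _ hp := ⟨hp, Set.mem_univ _⟩
  map_target' _ hq := hq.1
  left_inv' := by
    rintro ⟨x, v, hv⟩ hx
    exact congrArg (TotalSpace.mk x) (Subtype.ext (smul_col_eq (hr x) hv hx))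
  right_inv' := by
    rintro ⟨x, c⟩ ⟨hx, -⟩
    exact Prod.ext rfl (div_mul_cancel₀ c hx)
  open_source :=
    (F i j).continuous.isOpen_support.preimage (continuous_fst.comp (continuous_toProd F))
  open_target := (F i j).continuous.isOpen_support.prod isOpen_univ
  continuousOn_toFun :=
    ((continuous_fst.prodMk ((continuous_apply i).comp continuous_snd)).comp
      (continuous_toProd F)).continuousOn
  continuousOn_invFun := by
    rw [(isInducing_toProd F).continuousOn_iff]
    refine continuousOn_fst.prodMk (ContinuousOn.smul (f := fun q : X × ℂ => q.2 / F i j q.1)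
      (g := fun q : X × ℂ => fun k => F k j q.1) ?_ ?_)
    · exact continuousOn_snd.div ((F i j).continuous.comp continuous_fst).continuousOn
        fun q hq => hq.1
    · exact (continuous_pi fun k => (F k j).continuous.comp continuous_fst).continuousOn
  baseSet := Function.support (F i j)
  open_baseSet := (F i j).continuous.isOpen_support
  source_eq := rfl
  target_eq := rfl
  proj_toFun _ _ := rfl

instance (hr : ∀ x, (F.map (· x)).rank = 1) (i j : ι) : (localTriv hr i j).IsLinear ℂ :=
  ⟨fun _ _ => ⟨fun _ _ => rfl, fun _ _ => rfl⟩⟩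

theorem coordChangeL_localTriv (hr : ∀ x, (F.map (· x)).rank = 1) {i j i' j' : ι} {x : X}
    (hx : x ∈ (localTriv hr i j).baseSet ∩ (localTriv hr i' j').baseSet) :
    (localTriv hr i j).coordChangeL ℂ (localTriv hr i' j') x
      = (F i' j x / F i j x) • ContinuousLinearMap.id ℂ ℂ := by
  refine ContinuousLinearMap.ext fun y => ?_
  rw [ContinuousLinearEquiv.coe_coe, Trivialization.coordChangeL_apply' _ _ hx]
  exact div_mul_comm _ _ _

theorem exists_apply_ne_zero {x : X} (hr : (F.map (· x)).rank = 1) :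
    ∃ ij : ι × ι, F ij.1 ij.2 x ≠ 0 := by
  by_contra! h
  have h0 : F.map (· x) = 0 := by
    ext i j
    exact h (i, j)
  simp [h0] at hr

@[reducible] noncomputable def fiberBundle (hr : ∀ x, (F.map (· x)).rank = 1) :
    FiberBundle ℂ (RangeFiber F) where
  totalSpaceMk_isInducing' := isInducing_mk F
  trivializationAtlas' := Set.range fun ij : ι × ι => localTriv hr ij.1 ij.2
  trivializationAt' x :=
    localTriv hr (exists_apply_ne_zero (hr x)).choose.1 (exists_apply_ne_zero (hr x)).choose.2
  mem_baseSet_trivializationAt' x := (exists_apply_ne_zero (hr x)).choose_spec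
  trivialization_mem_atlas' _ := ⟨_, rfl⟩

theorem vectorBundle (hr : ∀ x, (F.map (· x)).rank = 1) :
    letI := fiberBundle hr
    VectorBundle ℂ ℂ (RangeFiber F) := by
  let := fiberBundle hr
  refine ⟨fun e he => ?_, fun e e' he he' => ?_⟩
  · obtain ⟨⟨i, j⟩, rfl⟩ : e ∈ Set.range _ := he.out
    infer_instance
  · obtain ⟨⟨i, j⟩, rfl⟩ : e ∈ Set.range _ := he.out
    obtain ⟨⟨i', j'⟩, rfl⟩ : e' ∈ Set.range _ := he'.out
    refine ContinuousOn.congr ?_ fun x hx => coordChangeL_localTriv hr hx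
    exact ((F i' j).continuous.continuousOn.div (F i j).continuous.continuousOn
      fun x hx => hx.1).smul continuousOn_const

theorem exists_continuous_section (e : Trivialization ℂ (π ℂ (RangeFiber F))) [e.IsLinear ℂ]
    (he : e.baseSet = Set.univ) :
    ∃ s : X → ι → ℂ, Continuous s ∧ (∀ x, s x ≠ 0) ∧
      ∀ x, s x ∈ LinearMap.range (F.map (· x)).mulVecLin := by
  have hx (x : X) : x ∈ e.baseSet := he ▸ Set.mem_univ x
  refine ⟨fun x => e.symm x 1, ?_, fun x h => ?_, fun x => (e.symm x 1).2⟩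
  · exact continuous_snd.comp ((continuous_toProd F).comp (e.continuous_mk_symm he 1))
  · have h1 : e.symm x 1 ≠ 0 := by
      rw [← e.linearEquivAt_symm_apply (R := ℂ) x (hx x)]
      exact (LinearEquiv.map_ne_zero_iff _).mpr one_ne_zero
    exact h1 (Subtype.ext h)

end RangeFiber

end LineBundle

theorem lineBundles_trivial_imp_rank_one_free_general (X : Type*) [TopologicalSpace X]
    (htriv : ∀ (E : X → Type) [TopologicalSpace (TotalSpace ℂ E)]
      [∀ x, AddCommGroup (E x)] [∀ x, Module ℂ (E x)] [∀ x, TopologicalSpace (E x)]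
      [FiberBundle ℂ E] [VectorBundle ℂ ℂ E],
      ∃ e : Trivialization ℂ (Bundle.TotalSpace.proj : TotalSpace ℂ E → X),
        Trivialization.IsLinear ℂ e ∧ e.baseSet = Set.univ) :
    ∀ (n : ℕ) (F : Matrix (Fin n) (Fin n) C(X, ℂ)), F * F = F →
      (∀ x : X, (F.map (fun f => f x)).rank = 1) →
      Nonempty (Module.Basis (Fin 1) C(X, ℂ) ↥(LinearMap.range F.mulVecLin)) := by
  intro n F hFF hr
  let := RangeFiber.fiberBundle hr
  have := RangeFiber.vectorBundle hr
  obtain ⟨e, he, hbase⟩ := htriv (RangeFiber F)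
  obtain ⟨s, hs, hs0, hsF⟩ := RangeFiber.exists_continuous_section e hbase
  exact nonempty_basis_range_of_section hFF hr hs hs0 hsF

/-- Let `X` be a connected compact Hausdorff space on which every continuous complex line
bundle is trivial (admits a global linear trivialization). Then `C(X, ℂ)` is projective
free in rank one: every finitely generated projective `C(X, ℂ)`-module of rank `1`
(presented as the range of an idempotent matrix of pointwise rank `1`) is free. -/
theorem lineBundles_trivial_imp_rank_one_free (X : Type*) [TopologicalSpace X]
    [CompactSpace X] [T2Space X] [ConnectedSpace X]
    (htriv : ∀ (E : X → Type) [TopologicalSpace (TotalSpace ℂ E)]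
      [∀ x, AddCommGroup (E x)] [∀ x, Module ℂ (E x)] [∀ x, TopologicalSpace (E x)]
      [FiberBundle ℂ E] [VectorBundle ℂ ℂ E],
      ∃ e : Trivialization ℂ (Bundle.TotalSpace.proj : TotalSpace ℂ E → X),
        Trivialization.IsLinear ℂ e ∧ e.baseSet = Set.univ) :
    ∀ (n : ℕ) (F : Matrix (Fin n) (Fin n) C(X, ℂ)), F * F = F →
      (∀ x : X, (F.map (fun f => f x)).rank = 1) →
      Nonempty (Module.Basis (Fin 1) C(X, ℂ) ↥(LinearMap.range F.mulVecLin)) :=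
  lineBundles_trivial_imp_rank_one_free_general X htriv
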